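/- arXiv:1907.09862 — 7 statements merged into one kernel-verified Lean document; each statement's English description precedes it below -/
import Mathlib

section
/- Let α⁺, λ⁺, α⁻, λ⁻ > 0 with λ⁺ + λ⁻ > 1, and let r ≥ q ≥ 0. Define f : (−λ⁻, λ⁺ − 1) → ℝ by f(Θ) = α⁺(ln(λ⁺ − Θ) − ln(λ⁺ − 1 − Θ)) + α⁻(ln(λ⁻ + Θ) − ln(λ⁻ + 1 + Θ)). Then there exists a unique Θ ∈ (−λ⁻, λ⁺ − 1) with f(Θ) = r − q. -/
open Real Set Filter Topology

theorem esscher_parameter_exists_unique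
    (ap lp am lm r q : ℝ)
    (hap : 0 < ap) (hlp : 0 < lp) (ham : 0 < am) (hlm : 0 < lm)
    (hsum : 1 < lp + lm) (hq : 0 ≤ q) (hrq : q ≤ r)
    (f : ℝ → ℝ)
    (hf : ∀ Θ ∈ Ioo (-lm) (lp - 1),
      f Θ = ap * (Real.log (lp - Θ) - Real.log (lp - 1 - Θ))
          + am * (Real.log (lm + Θ) - Real.log (lm + 1 + Θ))) :
    ∃! Θ, Θ ∈ Ioo (-lm) (lp - 1) ∧ f Θ = r - q := by
  set g : ℝ → ℝ := fun Θ => ap * (Real.log (lp - Θ) - Real.log (lp - 1 - Θ))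
          + am * (Real.log (lm + Θ) - Real.log (lm + 1 + Θ)) with hgdef
  have hLR : -lm < lp - 1 := by linarith
  have hpos : ∀ x ∈ Ioo (-lm) (lp - 1),
      0 < lp - x ∧ 0 < lp - 1 - x ∧ 0 < lm + x ∧ 0 < lm + 1 + x := by
    rintro x ⟨h1, h2⟩
    exact ⟨by linarith, by linarith, by linarith, by linarith⟩
  have hderiv : ∀ x ∈ Ioo (-lm) (lp - 1), HasDerivAt g
      (ap * (-1 / (lp - x) - -1 / (lp - 1 - x)) + am * (1 / (lm + x) - 1 / (lm + 1 + x))) x := by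
    intro x hx
    obtain ⟨hp1, hp2, hp3, hp4⟩ := hpos x hx
    have h1 : HasDerivAt (fun y => Real.log (lp - y)) (-1 / (lp - x)) x := by
      simpa using (((hasDerivAt_id x).const_sub lp).log (ne_of_gt hp1))
    have h2 : HasDerivAt (fun y => Real.log (lp - 1 - y)) (-1 / (lp - 1 - x)) x := by
      simpa [sub_sub] using (((hasDerivAt_id x).const_sub (lp - 1)).log (ne_of_gt hp2))
    have h3 : HasDerivAt (fun y => Real.log (lm + y)) (1 / (lm + x)) x := by
      simpa using (((hasDerivAt_id x).const_add lm).log (ne_of_gt hp3))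
    have h4 : HasDerivAt (fun y => Real.log (lm + 1 + y)) (1 / (lm + 1 + x)) x := by
      simpa [add_assoc] using (((hasDerivAt_id x).const_add (lm + 1)).log (ne_of_gt hp4))
    exact ((h1.sub h2).const_mul ap).add ((h3.sub h4).const_mul am)
  have hcont : ContinuousOn g (Ioo (-lm) (lp - 1)) :=
    fun x hx => ((hderiv x hx).continuousAt).continuousWithinAt
  have hmono : StrictMonoOn g (Ioo (-lm) (lp - 1)) := by
    apply strictMonoOn_of_deriv_pos (convex_Ioo _ _) hcont
    intro x hx
    rw [interior_Ioo] at hx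
    obtain ⟨hp1, hp2, hp3, hp4⟩ := hpos x hx
    rw [(hderiv x hx).deriv]
    have e1 : -1 / (lp - x) - -1 / (lp - 1 - x) = 1 / (lp - 1 - x) - 1 / (lp - x) := by ring
    have t1 : 1 / (lp - x) < 1 / (lp - 1 - x) :=
      one_div_lt_one_div_of_lt hp2 (by linarith)
    have t2 : 1 / (lm + 1 + x) < 1 / (lm + x) :=
      one_div_lt_one_div_of_lt hp3 (by linarith)
    rw [e1]
    have := mul_pos hap (sub_pos.mpr t1)
    have := mul_pos ham (sub_pos.mpr t2)
    linarith
  -- limit at the left endpoint: g → -∞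
  have hbot : Tendsto g (𝓝[>] (-lm)) atBot := by
    have hge : g = fun Θ => (ap * (Real.log (lp - Θ) - Real.log (lp - 1 - Θ))
        - am * Real.log (lm + 1 + Θ)) + am * Real.log (lm + Θ) := by
      funext Θ; simp only [hgdef]; ring
    rw [hge]
    have hF : ContinuousAt (fun Θ => ap * (Real.log (lp - Θ) - Real.log (lp - 1 - Θ))
        - am * Real.log (lm + 1 + Θ)) (-lm) := by
      have c1 : ContinuousAt (fun Θ : ℝ => Real.log (lp - Θ)) (-lm) :=
        (continuousAt_const.sub continuousAt_id).log
          (ne_of_gt (show (0:ℝ) < lp - -lm by linarith))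
      have c2 : ContinuousAt (fun Θ : ℝ => Real.log (lp - 1 - Θ)) (-lm) :=
        (continuousAt_const.sub continuousAt_id).log
          (ne_of_gt (show (0:ℝ) < lp - 1 - -lm by linarith))
      have c3 : ContinuousAt (fun Θ : ℝ => Real.log (lm + 1 + Θ)) (-lm) :=
        (continuousAt_const.add continuousAt_id).log
          (ne_of_gt (show (0:ℝ) < lm + 1 + -lm by linarith))
      exact ((continuousAt_const.mul (c1.sub c2)).sub (continuousAt_const.mul c3))
    have h0 : Tendsto (fun Θ => lm + Θ) (𝓝[>] (-lm)) (𝓝[>] (0:ℝ)) := by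
      rw [tendsto_nhdsWithin_iff]
      constructor
      · have : Tendsto (fun Θ : ℝ => lm + Θ) (𝓝 (-lm)) (𝓝 (lm + -lm)) :=
          (continuous_const.add continuous_id).continuousAt
        simpa using this.mono_left nhdsWithin_le_nhds
      · filter_upwards [self_mem_nhdsWithin] with Θ hΘ
        simp only [mem_Ioi] at hΘ ⊢
        linarith
    have hlog : Tendsto (fun Θ => Real.log (lm + Θ)) (𝓝[>] (-lm)) atBot :=
      Real.tendsto_log_nhdsGT_zero.comp h0
    exact (hF.tendsto.mono_left nhdsWithin_le_nhds).add_atBot (hlog.const_mul_atBot ham)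
  -- limit at the right endpoint: g → +∞
  have htop : Tendsto g (𝓝[<] (lp - 1)) atTop := by
    have hge : g = fun Θ => (ap * Real.log (lp - Θ)
        + am * (Real.log (lm + Θ) - Real.log (lm + 1 + Θ)))
        + ap * -Real.log (lp - 1 - Θ) := by
      funext Θ; simp only [hgdef]; ring
    rw [hge]
    have hG : ContinuousAt (fun Θ => ap * Real.log (lp - Θ)
        + am * (Real.log (lm + Θ) - Real.log (lm + 1 + Θ))) (lp - 1) := by
      have c1 : ContinuousAt (fun Θ : ℝ => Real.log (lp - Θ)) (lp - 1) :=
        (continuousAt_const.sub continuousAt_id).log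
          (ne_of_gt (show (0:ℝ) < lp - (lp - 1) by linarith))
      have c3 : ContinuousAt (fun Θ : ℝ => Real.log (lm + Θ)) (lp - 1) :=
        (continuousAt_const.add continuousAt_id).log
          (ne_of_gt (show (0:ℝ) < lm + (lp - 1) by linarith))
      have c4 : ContinuousAt (fun Θ : ℝ => Real.log (lm + 1 + Θ)) (lp - 1) :=
        (continuousAt_const.add continuousAt_id).log
          (ne_of_gt (show (0:ℝ) < lm + 1 + (lp - 1) by linarith))
      exact (continuousAt_const.mul c1).add (continuousAt_const.mul (c3.sub c4))
    have h0 : Tendsto (fun Θ => lp - 1 - Θ) (𝓝[<] (lp - 1)) (𝓝[>] (0:ℝ)) := by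
      rw [tendsto_nhdsWithin_iff]
      constructor
      · have : Tendsto (fun Θ : ℝ => lp - 1 - Θ) (𝓝 (lp - 1)) (𝓝 (lp - 1 - (lp - 1))) :=
          (continuous_const.sub continuous_id).continuousAt
        simpa using this.mono_left nhdsWithin_le_nhds
      · filter_upwards [self_mem_nhdsWithin] with Θ hΘ
        simp only [mem_Iio] at hΘ
        simp only [mem_Ioi]
        linarith
    have hlog : Tendsto (fun Θ => Real.log (lp - 1 - Θ)) (𝓝[<] (lp - 1)) atBot :=
      Real.tendsto_log_nhdsGT_zero.comp h0
    have hneg : Tendsto (fun Θ => -Real.log (lp - 1 - Θ)) (𝓝[<] (lp - 1)) atTop :=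
      tendsto_neg_atBot_atTop.comp hlog
    exact (hG.tendsto.mono_left nhdsWithin_le_nhds).add_atTop (hneg.const_mul_atTop hap)
  -- pick points a, b
  set m : ℝ := (-lm + (lp - 1)) / 2 with hm
  have hm1 : -lm < m := by simp only [hm]; linarith
  have hm2 : m < lp - 1 := by simp only [hm]; linarith
  have ha : ∃ a, a ∈ Ioo (-lm) m ∧ g a < r - q := by
    have h1 : ∀ᶠ x in 𝓝[>] (-lm), g x < r - q := hbot.eventually (eventually_lt_atBot (r - q))
    have h2 : Ioo (-lm) m ∈ 𝓝[>] (-lm) := Ioo_mem_nhdsGT_of_mem ⟨le_refl _, hm1⟩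
    obtain ⟨a, ha2, ha1⟩ := (h1.and (eventually_mem_set.mpr h2)).exists
    exact ⟨a, ha1, ha2⟩
  have hb : ∃ b, b ∈ Ioo m (lp - 1) ∧ r - q < g b := by
    have h1 : ∀ᶠ x in 𝓝[<] (lp - 1), r - q < g x := htop.eventually (eventually_gt_atTop (r - q))
    have h2 : Ioo m (lp - 1) ∈ 𝓝[<] (lp - 1) := Ioo_mem_nhdsLT_of_mem ⟨hm2, le_refl _⟩
    obtain ⟨b, hb2, hb1⟩ := (h1.and (eventually_mem_set.mpr h2)).exists
    exact ⟨b, hb1, hb2⟩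
  obtain ⟨a, ⟨ha1, ha2⟩, hga⟩ := ha
  obtain ⟨b, ⟨hb1, hb2⟩, hgb⟩ := hb
  have hab : a < b := lt_trans ha2 hb1
  have hIcc : Icc a b ⊆ Ioo (-lm) (lp - 1) := fun x hx =>
    ⟨lt_of_lt_of_le ha1 hx.1, lt_of_le_of_lt hx.2 hb2⟩
  have hIoo : Ioo a b ⊆ Ioo (-lm) (lp - 1) := fun x hx => hIcc (Ioo_subset_Icc_self hx)
  have hivt := intermediate_value_Ioo (le_of_lt hab) (hcont.mono hIcc)
  have hrq_mem : r - q ∈ Ioo (g a) (g b) := ⟨hga, hgb⟩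
  obtain ⟨Θ, hΘab, hgΘ⟩ := hivt hrq_mem
  have hΘmem : Θ ∈ Ioo (-lm) (lp - 1) := hIoo hΘab
  refine ⟨Θ, ⟨hΘmem, by rw [hf Θ hΘmem]; exact hgΘ⟩, ?_⟩
  rintro y ⟨hy, hfy⟩
  apply hmono.injOn hy hΘmem
  have h1 : g y = r - q := (hf y hy).symm.trans hfy
  rw [h1, hgΘ]
end

section
/- Let F be the measure on ℝ with density x ↦ (α⁺/x)e^{−λ⁺x}·1_{(0,∞)}(x) + (α⁻/|x|)e^{−λ⁻|x|}·1_{(−∞,0)}(x) with α⁺, λ⁺, α⁻, λ⁻ > 0 and λ⁺ > 1. Then ∫_ℝ (e^x − 1) F(dx) = α⁺ ln(λ⁺/(λ⁺−1)) + α⁻ ln(λ⁻/(λ⁻+1)). -/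
/-!
On `(0, ∞)` the integrand is `α⁺ (e^{-(λ⁺-1)x} - e^{-λ⁺x}) / x`, and after `x ↦ -x` the
negative half-line contributes `α⁻ (e^{-(λ⁻+1)y} - e^{-λ⁻y}) / y`. Both are Frullani
integrals `∫₀^∞ (e^{-ax} - e^{-bx}) / x dx = log (b / a)`.
-/

open Real Set MeasureTheory

/-- The density of the Lévy measure of a bilateral Gamma process. -/
noncomputable def bilateralGammaLevyDensity (ap lp am lm : ℝ) (x : ℝ) : ℝ :=
  if 0 < x then ap / x * Real.exp (-lp * x)
  else if x < 0 then am / |x| * Real.exp (-lm * |x|)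
  else 0

theorem integral_eq_integral_Ioi_comp_neg_add_integral_Ioi {E : Type*} [NormedAddCommGroup E]
    [NormedSpace ℝ E] {f : ℝ → E} (hneg : IntegrableOn (fun x => f (-x)) (Ioi 0))
    (hpos : IntegrableOn f (Ioi 0)) :
    ∫ x, f x = (∫ x in Ioi 0, f (-x)) + ∫ x in Ioi 0, f x := by
  have hIic : IntegrableOn f (Iic 0) := by
    let m : MeasurableEmbedding fun x : ℝ => -x := (Homeomorph.neg ℝ).measurableEmbedding
    rw [← Measure.map_neg_eq_self (volume : Measure ℝ), m.integrableOn_map_iff]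
    simpa [Function.comp_def, neg_preimage, integrableOn_Ici_iff_integrableOn_Ioi] using hneg
  rw [← intervalIntegral.integral_Iic_add_Ioi hIic hpos, integral_comp_neg_Ioi, neg_zero]

namespace Frullani

theorem integrableOn_Ioi_exp_neg_of_le {a b : ℝ} (ha : 0 < a) (hab : a ≤ b) :
    IntegrableOn (fun x => x⁻¹ * (exp (-(a * x)) - exp (-(b * x)))) (Ioi 0) := by
  have hdom := (exp_neg_integrableOn_Ioi 0 ha).const_mul (b - a)
  simp only [neg_mul] at hdom
  -- `0 ≤ (e^{-ax} - e^{-bx}) / x ≤ (b - a) e^{-ax}`,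
  -- from `e^{-bx} = e^{-ax} e^{-(b-a)x}` and `1 - t ≤ e^{-t}`
  refine hdom.mono' (by fun_prop) ?_
  filter_upwards [ae_restrict_mem measurableSet_Ioi] with x (hx : 0 < x)
  have hsplit : exp (-(b * x)) = exp (-(a * x)) * exp (-((b - a) * x)) := by
    rw [← exp_add]; ring_nf
  have hlow := one_sub_le_exp_neg ((b - a) * x)
  have hdiff : 0 ≤ exp (-(a * x)) - exp (-(b * x)) := by
    rw [sub_nonneg, exp_le_exp]; nlinarith
  rw [Real.norm_eq_abs, abs_of_nonneg (mul_nonneg (inv_nonneg.2 hx.le) hdiff),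
    inv_mul_le_iff₀ hx, hsplit]
  nlinarith [mul_le_mul_of_nonneg_left hlow (exp_pos (-(a * x))).le]

theorem integrableOn_Ioi_exp_neg {a b : ℝ} (ha : 0 < a) (hb : 0 < b) :
    IntegrableOn (fun x => x⁻¹ * (exp (-(a * x)) - exp (-(b * x)))) (Ioi 0) := by
  rcases le_total a b with hab | hba
  · exact integrableOn_Ioi_exp_neg_of_le ha hab
  · refine (integrableOn_Ioi_exp_neg_of_le hb hba).neg.congr_fun (fun x _ => ?_) measurableSet_Ioi
    simp only [Pi.neg_apply]
    ring

theorem integral_Ioi_exp_neg {a b : ℝ} (ha : 0 < a) (hb : 0 < b) :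
    ∫ x in Ioi 0, x⁻¹ * (exp (-(a * x)) - exp (-(b * x))) = log (b / a) := by
  have hcont : Continuous fun x : ℝ => exp (-x) := by fun_prop
  have hL : Filter.Tendsto (fun x : ℝ => exp (-x)) (nhdsWithin 0 (Ioi 0)) (nhds 1) :=
    (hcont.tendsto' 0 1 (by simp)).mono_left nhdsWithin_le_nhds
  simpa using integral_Ioi_eq (hcont.locallyIntegrable.locallyIntegrableOn _) ha hb hL
    tendsto_exp_neg_atTop_nhds_zero (integrableOn_Ioi_exp_neg ha hb)

end Frullani

section bilateralGammaLevyDensity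

variable {ap lp am lm : ℝ}

theorem bilateralGammaLevyDensity_of_pos {x : ℝ} (hx : 0 < x) :
    bilateralGammaLevyDensity ap lp am lm x = ap / x * exp (-lp * x) :=
  if_pos hx

theorem bilateralGammaLevyDensity_neg_of_pos {y : ℝ} (hy : 0 < y) :
    bilateralGammaLevyDensity ap lp am lm (-y) = am / y * exp (-lm * y) := by
  simp [bilateralGammaLevyDensity, hy, hy.le, abs_of_pos hy]

theorem exp_sub_one_mul_bilateralGammaLevyDensity_of_pos {x : ℝ} (hx : 0 < x) :
    (exp x - 1) * bilateralGammaLevyDensity ap lp am lm x =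
      ap * (x⁻¹ * (exp (-((lp - 1) * x)) - exp (-(lp * x)))) := by
  have hexp : exp (-((lp - 1) * x)) = exp x * exp (-lp * x) := by
    rw [← exp_add]; ring_nf
  rw [bilateralGammaLevyDensity_of_pos hx, hexp, neg_mul]
  ring

theorem exp_neg_sub_one_mul_bilateralGammaLevyDensity_neg_of_pos {y : ℝ} (hy : 0 < y) :
    (exp (-y) - 1) * bilateralGammaLevyDensity ap lp am lm (-y) =
      am * (y⁻¹ * (exp (-((lm + 1) * y)) - exp (-(lm * y)))) := by
  have hexp : exp (-((lm + 1) * y)) = exp (-y) * exp (-lm * y) := by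
    rw [← exp_add]; ring_nf
  rw [bilateralGammaLevyDensity_neg_of_pos hy, hexp, neg_mul]
  ring

end bilateralGammaLevyDensity

theorem bilateral_gamma_levy_integral_exp_sub_one_general
    (ap lp am lm : ℝ)
    (hlm : 0 < lm)
    (hlp1 : 1 < lp) :
    ∫ x : ℝ, (Real.exp x - 1) * bilateralGammaLevyDensity ap lp am lm x =
      ap * Real.log (lp / (lp - 1)) + am * Real.log (lm / (lm + 1)) := by
  have hlp0 : 0 < lp - 1 := sub_pos.2 hlp1
  have hneg : EqOn (fun y => (exp (-y) - 1) * bilateralGammaLevyDensity ap lp am lm (-y))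
      (fun y => am * (y⁻¹ * (exp (-((lm + 1) * y)) - exp (-(lm * y))))) (Ioi 0) :=
    fun _ hy => exp_neg_sub_one_mul_bilateralGammaLevyDensity_neg_of_pos hy
  have hpos : EqOn (fun x => (exp x - 1) * bilateralGammaLevyDensity ap lp am lm x)
      (fun x => ap * (x⁻¹ * (exp (-((lp - 1) * x)) - exp (-(lp * x))))) (Ioi 0) :=
    fun _ hx => exp_sub_one_mul_bilateralGammaLevyDensity_of_pos hx
  rw [integral_eq_integral_Ioi_comp_neg_add_integral_Ioi
      (IntegrableOn.congr_fun ((Frullani.integrableOn_Ioi_exp_neg (by linarith) hlm).const_mul am)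
        hneg.symm measurableSet_Ioi)
      (IntegrableOn.congr_fun ((Frullani.integrableOn_Ioi_exp_neg hlp0 (by linarith)).const_mul ap)
        hpos.symm measurableSet_Ioi),
    setIntegral_congr_fun measurableSet_Ioi hneg, setIntegral_congr_fun measurableSet_Ioi hpos,
    integral_const_mul, integral_const_mul, Frullani.integral_Ioi_exp_neg (by linarith) hlm,
    Frullani.integral_Ioi_exp_neg hlp0 (by linarith)]
  ring

theorem bilateral_gamma_levy_integral_exp_sub_one
    (ap lp am lm : ℝ)
    (hap : 0 < ap) (hlp : 0 < lp) (ham : 0 < am) (hlm : 0 < lm)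
    (hlp1 : 1 < lp) :
    ∫ x : ℝ, (Real.exp x - 1) * bilateralGammaLevyDensity ap lp am lm x =
      ap * Real.log (lp / (lp - 1)) + am * Real.log (lm / (lm + 1)) :=
  bilateral_gamma_levy_integral_exp_sub_one_general ap lp am lm hlm hlp1
end

section
/- Let F be the Lévy measure of a bilateral Gamma process with parameters α⁺, λ⁺, α⁻, λ⁻ > 0 and assume λ⁺ > 2. Then ∫_ℝ (e^x − 1)² F(dx) = Ψ(2) − 2Ψ(1) > 0, where Ψ(z) = α⁺ ln(λ⁺/(λ⁺ − z)) + α⁻ ln(λ⁻/(λ⁻ + z)). -/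
open Real Set MeasureTheory

/-- The cumulant generating function of a bilateral Gamma distribution. -/
noncomputable def bilateralGammaCGF (ap lp am lm z : ℝ) : ℝ :=
  ap * Real.log (lp / (lp - z)) + am * Real.log (lm / (lm + z))

/-!
With `e^{zx} - 1` weighted by the one-sided Gamma Lévy density `α x⁻¹ e^{-βx}` one gets
`α x⁻¹ (e^{-(β - z)x} - e^{-βx})`, so Frullani's integral gives the cumulant generating function
`α log (β / (β - z))` of the Gamma distribution. Since `(e^y - 1)² = (e^{2y} - 1) - 2 (e^y - 1)`,
the claimed identity holds on each half-line (the negative one by reflection `x ↦ -x`), and the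
positivity of `Ψ(2) - 2 Ψ(1)` is the strict concavity of `log`: `β (β - 2c) < (β - c)²` for `c ≠ 0`.
-/

noncomputable def gammaLevyDensity (α β x : ℝ) : ℝ := α / x * exp (-β * x)

noncomputable def gammaCGF (α β z : ℝ) : ℝ := α * log (β / (β - z))

lemma integrableOn_Ioi_inv_mul_exp_neg_mul_sub {a b : ℝ} (ha : 0 < a) (hb : 0 < b) :
    IntegrableOn (fun x => x⁻¹ * (exp (-(a * x)) - exp (-(b * x)))) (Ioi 0) := by
  wlog hab : a ≤ b generalizing a b
  · refine (this hb ha (le_of_not_ge hab)).neg.congr_fun (fun x _ => ?_) measurableSet_Ioi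
    simp only [Pi.neg_apply]
    ring
  refine Integrable.mono' ((exp_neg_integrableOn_Ioi 0 ha).const_mul (b - a))
    (by fun_prop) ?_
  filter_upwards [ae_restrict_mem measurableSet_Ioi] with x (hx : 0 < x)
  -- `e^{-ax} - e^{-bx} = e^{-ax} (1 - e^{-(b-a)x})` and `1 - e^{-t} ≤ t`
  have hsplit : exp (-(b * x)) = exp (-(a * x)) * exp (-((b - a) * x)) := by
    rw [← exp_add]; ring_nf
  have hdiff : 0 ≤ exp (-(a * x)) - exp (-(b * x)) :=
    sub_nonneg.2 (exp_le_exp.2 (by nlinarith))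
  have htangent := add_one_le_exp (-((b - a) * x))
  rw [norm_mul, norm_inv, norm_of_nonneg hdiff, norm_of_nonneg hx.le, inv_mul_le_iff₀ hx,
    hsplit, neg_mul]
  nlinarith [exp_pos (-(a * x))]

lemma integral_Ioi_inv_mul_exp_neg_mul_sub {a b : ℝ} (ha : 0 < a) (hb : 0 < b) :
    ∫ x in Ioi 0, x⁻¹ * (exp (-(a * x)) - exp (-(b * x))) = log (b / a) := by
  have hcont : Continuous fun x => exp (-x) := by fun_prop
  have hL : Filter.Tendsto (fun x => exp (-x)) (nhdsWithin 0 (Ioi 0)) (nhds 1) := by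
    simpa using (hcont.tendsto 0).mono_left nhdsWithin_le_nhds
  simpa using Frullani.integral_Ioi_eq (hcont.locallyIntegrable.locallyIntegrableOn _)
    ha hb hL tendsto_exp_neg_atTop_nhds_zero (integrableOn_Ioi_inv_mul_exp_neg_mul_sub ha hb)

section GammaLevyMeasure

variable {α β : ℝ}

lemma exp_sub_one_mul_gammaLevyDensity (z x : ℝ) :
    (exp (z * x) - 1) * gammaLevyDensity α β x
      = α * (x⁻¹ * (exp (-((β - z) * x)) - exp (-(β * x)))) := by
  have hexp : exp (-((β - z) * x)) = exp (z * x) * exp (-β * x) := by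
    rw [← exp_add]; ring_nf
  rw [gammaLevyDensity, hexp, neg_mul]
  ring

lemma integrableOn_exp_sub_one_mul_gammaLevyDensity {z : ℝ} (hβ : 0 < β) (hz : z < β) :
    IntegrableOn (fun x => (exp (z * x) - 1) * gammaLevyDensity α β x) (Ioi 0) := by
  simp only [exp_sub_one_mul_gammaLevyDensity]
  exact (integrableOn_Ioi_inv_mul_exp_neg_mul_sub (sub_pos.2 hz) hβ).const_mul α

lemma integral_exp_sub_one_mul_gammaLevyDensity {z : ℝ} (hβ : 0 < β) (hz : z < β) :
    ∫ x in Ioi 0, (exp (z * x) - 1) * gammaLevyDensity α β x = gammaCGF α β z := by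
  simp only [exp_sub_one_mul_gammaLevyDensity, integral_const_mul,
    integral_Ioi_inv_mul_exp_neg_mul_sub (sub_pos.2 hz) hβ, gammaCGF]

lemma exp_mul_sub_one_sq_mul (c x y : ℝ) :
    (exp (c * x) - 1) ^ 2 * y = (exp (2 * c * x) - 1) * y - 2 * ((exp (c * x) - 1) * y) := by
  rw [mul_assoc, two_mul, exp_add]
  ring

lemma integrableOn_exp_sub_one_sq_mul_gammaLevyDensity {c : ℝ} (hβ : 0 < β) (hc : 2 * c < β) :
    IntegrableOn (fun x => (exp (c * x) - 1) ^ 2 * gammaLevyDensity α β x) (Ioi 0) := by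
  have hc' : c < β := by linarith
  simp only [exp_mul_sub_one_sq_mul]
  exact (integrableOn_exp_sub_one_mul_gammaLevyDensity hβ hc).sub
    ((integrableOn_exp_sub_one_mul_gammaLevyDensity hβ hc').const_mul 2)

lemma integral_exp_sub_one_sq_mul_gammaLevyDensity {c : ℝ} (hβ : 0 < β) (hc : 2 * c < β) :
    ∫ x in Ioi 0, (exp (c * x) - 1) ^ 2 * gammaLevyDensity α β x
      = gammaCGF α β (2 * c) - 2 * gammaCGF α β c := by
  have hc' : c < β := by linarith
  simp only [exp_mul_sub_one_sq_mul]
  rw [integral_sub (integrableOn_exp_sub_one_mul_gammaLevyDensity hβ hc)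
    ((integrableOn_exp_sub_one_mul_gammaLevyDensity hβ hc').const_mul 2), integral_const_mul,
    integral_exp_sub_one_mul_gammaLevyDensity hβ hc,
    integral_exp_sub_one_mul_gammaLevyDensity hβ hc']

lemma gammaCGF_two_mul_sub_two_mul_pos {c : ℝ} (hα : 0 < α) (hβ : 0 < β) (hc₀ : c ≠ 0)
    (hc : 2 * c < β) : 0 < gammaCGF α β (2 * c) - 2 * gammaCGF α β c := by
  have h2c : 0 < β - 2 * c := by linarith
  have h1c : 0 < β - c := by linarith
  have hconc : log β + log (β - 2 * c) < 2 * log (β - c) := by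
    rw [← log_mul hβ.ne' h2c.ne', two_mul (log _), ← log_mul h1c.ne' h1c.ne']
    exact log_lt_log (mul_pos hβ h2c) (by nlinarith [sq_pos_of_ne_zero hc₀])
  have hcgf : gammaCGF α β (2 * c) - 2 * gammaCGF α β c
      = α * (2 * log (β - c) - (log β + log (β - 2 * c))) := by
    simp only [gammaCGF, log_div hβ.ne' h2c.ne', log_div hβ.ne' h1c.ne']
    ring
  rw [hcgf]
  exact mul_pos hα (by linarith)

end GammaLevyMeasure

lemma bilateralGammaLevyDensity_eq_indicator (ap lp am lm x : ℝ) :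
    bilateralGammaLevyDensity ap lp am lm x
      = (Ioi 0).indicator (gammaLevyDensity ap lp) x
        + (Ioi 0).indicator (gammaLevyDensity am lm) (-x) := by
  rcases lt_trichotomy x 0 with hx | rfl | hx
  · simp [bilateralGammaLevyDensity, hx, hx.not_gt, abs_of_neg hx, gammaLevyDensity]
  · simp [bilateralGammaLevyDensity]
  · simp [bilateralGammaLevyDensity, hx, hx.not_gt, gammaLevyDensity]

lemma bilateralGammaCGF_eq_add (ap lp am lm z : ℝ) :
    bilateralGammaCGF ap lp am lm z = gammaCGF ap lp z + gammaCGF am lm (-z) := by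
  simp only [bilateralGammaCGF, gammaCGF, sub_neg_eq_add]

lemma integral_mul_bilateralGammaLevyDensity {ap lp am lm : ℝ} {g : ℝ → ℝ}
    (hpos : IntegrableOn (fun x => g x * gammaLevyDensity ap lp x) (Ioi 0))
    (hneg : IntegrableOn (fun x => g (-x) * gammaLevyDensity am lm x) (Ioi 0)) :
    ∫ x, g x * bilateralGammaLevyDensity ap lp am lm x
      = (∫ x in Ioi 0, g x * gammaLevyDensity ap lp x)
        + ∫ x in Ioi 0, g (-x) * gammaLevyDensity am lm x := by
  have hsplit : ∀ x, g x * bilateralGammaLevyDensity ap lp am lm x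
      = (Ioi 0).indicator (fun y => g y * gammaLevyDensity ap lp y) x
        + (Ioi 0).indicator (fun y => g (-y) * gammaLevyDensity am lm y) (-x) := by
    intro x
    rw [bilateralGammaLevyDensity_eq_indicator, mul_add, indicator_mul_right,
      indicator_mul_right, neg_neg]
  simp_rw [hsplit]
  rw [integral_add ((integrable_indicator_iff measurableSet_Ioi).2 hpos)
    ((integrable_indicator_iff measurableSet_Ioi).2 hneg).comp_neg,
    integral_neg_eq_self ((Ioi 0).indicator fun y => g (-y) * gammaLevyDensity am lm y),
    integral_indicator measurableSet_Ioi, integral_indicator measurableSet_Ioi]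

theorem bilateral_gamma_levy_integral_sq
    (ap lp am lm : ℝ)
    (hap : 0 < ap) (hlp : 0 < lp) (ham : 0 < am) (hlm : 0 < lm)
    (hlp2 : 2 < lp) :
    (∫ x : ℝ, (Real.exp x - 1) ^ 2 * bilateralGammaLevyDensity ap lp am lm x =
      bilateralGammaCGF ap lp am lm 2 - 2 * bilateralGammaCGF ap lp am lm 1) ∧
    0 < bilateralGammaCGF ap lp am lm 2 - 2 * bilateralGammaCGF ap lp am lm 1 := by
  have hlp' : 2 * (1 : ℝ) < lp := by linarith
  have hlm' : 2 * (-1 : ℝ) < lm := by linarith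
  have hcgf : bilateralGammaCGF ap lp am lm 2 - 2 * bilateralGammaCGF ap lp am lm 1
      = (gammaCGF ap lp (2 * 1) - 2 * gammaCGF ap lp 1)
        + (gammaCGF am lm (2 * -1) - 2 * gammaCGF am lm (-1)) := by
    rw [bilateralGammaCGF_eq_add, bilateralGammaCGF_eq_add, mul_one, mul_neg_one]
    ring
  have hintegral := integral_mul_bilateralGammaLevyDensity (g := fun x => (exp x - 1) ^ 2)
    (by simpa only [one_mul] using
      integrableOn_exp_sub_one_sq_mul_gammaLevyDensity (α := ap) hlp hlp')
    (by simpa only [neg_one_mul] using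
      integrableOn_exp_sub_one_sq_mul_gammaLevyDensity (α := am) hlm hlm')
  refine ⟨?_, ?_⟩
  · rw [hintegral, hcgf, ← integral_exp_sub_one_sq_mul_gammaLevyDensity hlp hlp',
      ← integral_exp_sub_one_sq_mul_gammaLevyDensity hlm hlm']
    simp only [one_mul, neg_one_mul]
  · rw [hcgf]
    exact add_pos (gammaCGF_two_mul_sub_two_mul_pos hap hlp one_ne_zero hlp')
      (gammaCGF_two_mul_sub_two_mul_pos ham hlm (by norm_num) hlm')
end

section
/- Let α⁺, λ⁺, α⁻, λ⁻ > 0, r ≥ q ≥ 0. Let a = λ⁺ − (1 − e^{−(r−q)/α⁺})^{−1} (with a = −∞ if r = q) and define Φ on (a, λ⁺ − 1) by Φ(θ) = λ⁻ − (( ((λ⁺−θ)/(λ⁺−θ−1))^{α⁺} e^{−(r−q)} )^{1/α⁻} − 1)^{−1}. Then Φ maps (a, λ⁺ − 1) into (−∞, λ⁻) and is strictly increasing. -/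
open Real Set

lemma esscher_gt_one_aux (ap lp r q : ℝ)
    (hap : 0 < ap) (hq : 0 ≤ q) (hrq : q ≤ r) (θ : ℝ)
    (hmem : θ ∈ (if r = q then Iio (lp - 1)
              else Ioo (lp - (1 - Real.exp (-(r - q) / ap))⁻¹) (lp - 1))) :
    1 < ((lp - θ) / (lp - θ - 1)) ^ ap * Real.exp (-(r - q)) := by
  by_cases hrq' : r = q
  · simp only [hrq', if_true, eq_self_iff_true, Set.mem_Iio] at hmem
    have hx : 1 < lp - θ := by linarith
    have hb : 1 < (lp - θ) / (lp - θ - 1) := by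
      rw [one_lt_div (by linarith)]; linarith
    have : 1 < ((lp - θ) / (lp - θ - 1)) ^ ap :=
      Real.one_lt_rpow_iff_of_pos (by linarith) |>.mpr (Or.inl ⟨hb, hap⟩)
    simpa [hrq'] using this
  · simp only [if_neg hrq', Set.mem_Ioo] at hmem
    obtain ⟨h1, h2⟩ := hmem
    have hr : q < r := lt_of_le_of_ne hrq (fun h => hrq' h.symm)
    set c := Real.exp (-(r - q) / ap) with hc
    have hc0 : 0 < c := Real.exp_pos _
    have hc1 : c < 1 := by
      rw [hc, Real.exp_lt_one_iff]
      have : 0 < (r - q) / ap := div_pos (by linarith) hap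
      rw [neg_div]; linarith
    set x := lp - θ with hxdef
    have hx1 : 1 < x := by simp only [hxdef]; linarith
    have hxub : x < (1 - c)⁻¹ := by simp only [hxdef]; linarith
    have hxc : x * (1 - c) < 1 := by
      rw [← one_div, lt_div_iff₀ (by linarith : (0:ℝ) < 1 - c)] at hxub
      exact hxub
    have hratio : 1 / c < x / (x - 1) := by
      rw [div_lt_div_iff₀ hc0 (by linarith)]
      nlinarith
    have hpow : (1 / c) ^ ap < (x / (x - 1)) ^ ap :=
      Real.rpow_lt_rpow (by positivity) hratio hap
    have hcpow : (1 / c) ^ ap = Real.exp (r - q) := by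
      rw [hc, one_div, ← Real.exp_neg, Real.rpow_def_of_pos (Real.exp_pos _), Real.log_exp]
      congr 1
      field_simp
    rw [hcpow] at hpow
    have hexp : 0 < Real.exp (-(r - q)) := Real.exp_pos _
    calc 1 = Real.exp (r - q) * Real.exp (-(r - q)) := by
            rw [← Real.exp_add]; simp
      _ < (x / (x - 1)) ^ ap * Real.exp (-(r - q)) := by
            exact mul_lt_mul_of_pos_right hpow hexp

lemma esscher_ratio_lt_aux (ap lp : ℝ) (hap : 0 < ap) (θ₁ θ₂ : ℝ)
    (h1 : 1 < lp - θ₁) (h2 : 1 < lp - θ₂) (h12 : θ₁ < θ₂) :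
    ((lp - θ₁) / (lp - θ₁ - 1)) ^ ap < ((lp - θ₂) / (lp - θ₂ - 1)) ^ ap := by
  apply Real.rpow_lt_rpow (le_of_lt (div_pos (by linarith) (by linarith))) _ hap
  rw [div_lt_div_iff₀ (by linarith) (by linarith)]
  nlinarith

theorem bilateral_esscher_parametrization_mono
    (ap lp am lm r q : ℝ)
    (hap : 0 < ap) (hlp : 0 < lp) (ham : 0 < am) (hlm : 0 < lm)
    (hq : 0 ≤ q) (hrq : q ≤ r)
    (Φ : ℝ → ℝ)
    (hΦ : ∀ θ, Φ θ =
      lm - (((((lp - θ) / (lp - θ - 1)) ^ ap * Real.exp (-(r - q))) ^ (1 / am)) - 1)⁻¹)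
    (I : Set ℝ)
    (hI : I = if r = q then Iio (lp - 1)
              else Ioo (lp - (1 - Real.exp (-(r - q) / ap))⁻¹) (lp - 1)) :
    (∀ θ ∈ I, Φ θ < lm) ∧ StrictMonoOn Φ I := by
  have hg : ∀ θ ∈ I, 1 < ((lp - θ) / (lp - θ - 1)) ^ ap * Real.exp (-(r - q)) := by
    intro θ hθ
    exact esscher_gt_one_aux ap lp r q hap hq hrq θ (hI ▸ hθ)
  have hx1 : ∀ θ ∈ I, 1 < lp - θ := by
    intro θ hθ
    rw [hI] at hθ
    by_cases hrq' : r = q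
    · simp only [if_pos hrq', Set.mem_Iio] at hθ; linarith
    · simp only [if_neg hrq', Set.mem_Ioo] at hθ; linarith
  have hpow1 : ∀ θ ∈ I,
      1 < (((lp - θ) / (lp - θ - 1)) ^ ap * Real.exp (-(r - q))) ^ (1 / am) := by
    intro θ hθ
    exact (Real.one_lt_rpow_iff_of_pos (by linarith [hg θ hθ])).mpr
      (Or.inl ⟨hg θ hθ, by positivity⟩)
  constructor
  · intro θ hθ
    rw [hΦ θ]
    have := hpow1 θ hθ
    have hpos : 0 < ((((lp - θ) / (lp - θ - 1)) ^ ap * Real.exp (-(r - q))) ^ (1 / am) - 1)⁻¹ :=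
      inv_pos.mpr (by linarith)
    linarith
  · intro θ₁ h1 θ₂ h2 h12
    rw [hΦ θ₁, hΦ θ₂]
    have hlt : ((lp - θ₁) / (lp - θ₁ - 1)) ^ ap < ((lp - θ₂) / (lp - θ₂ - 1)) ^ ap :=
      esscher_ratio_lt_aux ap lp hap θ₁ θ₂ (hx1 θ₁ h1) (hx1 θ₂ h2) h12
    have hgl : ((lp - θ₁) / (lp - θ₁ - 1)) ^ ap * Real.exp (-(r - q))
        < ((lp - θ₂) / (lp - θ₂ - 1)) ^ ap * Real.exp (-(r - q)) :=
      mul_lt_mul_of_pos_right hlt (Real.exp_pos _)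
    have hpl : (((lp - θ₁) / (lp - θ₁ - 1)) ^ ap * Real.exp (-(r - q))) ^ (1 / am)
        < (((lp - θ₂) / (lp - θ₂ - 1)) ^ ap * Real.exp (-(r - q))) ^ (1 / am) :=
      Real.rpow_lt_rpow (by linarith [hg θ₁ h1]) hgl (by positivity)
    have h1' := hpow1 θ₁ h1
    have h2' := hpow1 θ₂ h2
    have hinv : ((((lp - θ₂) / (lp - θ₂ - 1)) ^ ap * Real.exp (-(r - q))) ^ (1 / am) - 1)⁻¹
        < ((((lp - θ₁) / (lp - θ₁ - 1)) ^ ap * Real.exp (-(r - q))) ^ (1 / am) - 1)⁻¹ := by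
      apply inv_strictAnti₀ (by linarith) (by linarith)
    linarith
end

section
/- Let α⁺, λ⁺, α⁻, λ⁻ > 0, r ≥ q ≥ 0, and let Φ be as in the bilateral Esscher martingale parametrization on the interval I = (λ⁺ − (1 − e^{−(r−q)/α⁺})^{−1}, λ⁺ − 1). Then for θ⁺ ∈ (−∞, λ⁺) and θ⁻ ∈ (−∞, λ⁻) with λ⁺ − θ⁺ > 1, the equation ((λ⁺−θ⁺)/(λ⁺−θ⁺−1))^{α⁺} · ((λ⁻−θ⁻)/(λ⁻−θ⁻+1))^{α⁻} = e^{r−q} holds if and only if θ⁺ ∈ I and θ⁻ = Φ(θ⁺). -/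
/-!
Write `x = λ⁺ - θ⁺ > 1`, `y = λ⁻ - θ⁻ > 0` and `A = (x / (x - 1)) ^ α⁺ e^{-(r-q)}`. The martingale
equation says `(y / (y + 1)) ^ α⁻ = A⁻¹`. Since `y ↦ y / (y + 1)` maps `(0, ∞)` bijectively onto
`(0, 1)`, this has a solution exactly when `A > 1`, namely `y = (A ^ (1 / α⁻) - 1)⁻¹`, i.e.
`θ⁻ = Φ(θ⁺)`. Finally `A > 1` means `e^{(r-q)/α⁺} < x / (x - 1)`, which for `r > q` is the lower
bound `x < (1 - e^{-(r-q)/α⁺})⁻¹` defining `I` and for `r = q` holds for every `x > 1`.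
-/

open Real Set

theorem div_add_one_eq_inv_iff {y t : ℝ} (hy : 0 < y) :
    y / (y + 1) = t⁻¹ ↔ 1 < t ∧ y = (t - 1)⁻¹ := by
  have hrecip : y / (y + 1) = (1 + y⁻¹)⁻¹ := by field_simp
  rw [hrecip, inv_inj]
  constructor
  · rintro rfl
    exact ⟨lt_add_of_pos_right _ (inv_pos.2 hy), by simp⟩
  · rintro ⟨-, rfl⟩
    simp

theorem rpow_div_add_one_eq_inv_iff {y a A : ℝ} (hy : 0 < y) (ha : 0 < a) (hA : 0 < A) :
    (y / (y + 1)) ^ a = A⁻¹ ↔ 1 < A ∧ y = (A ^ (1 / a) - 1)⁻¹ := by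
  rw [← eq_rpow_inv (by positivity) (by positivity) ha.ne', inv_rpow hA.le,
    div_add_one_eq_inv_iff hy, one_div, one_lt_rpow_iff_of_pos hA]
  simp [ha, ha.le.not_gt]

theorem exp_lt_rpow_iff {c a b : ℝ} (ha : 0 < a) (hb : 0 ≤ b) :
    exp c < b ^ a ↔ exp (c / a) < b := by
  rw [← rpow_lt_rpow_iff (exp_pos _).le hb ha, ← exp_mul, div_mul_cancel₀ _ ha.ne']

theorem lt_div_sub_one_iff {x E : ℝ} (hx : 1 < x) (hE : 1 < E) :
    E < x / (x - 1) ↔ x < (1 - E⁻¹)⁻¹ := by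
  have hE' : (1 - E⁻¹)⁻¹ = E / (E - 1) := by field_simp
  rw [hE', lt_div_iff₀ (by linarith), lt_div_iff₀ (by linarith)]
  constructor <;> intro h <;> linarith

theorem bilateral_esscher_martingale_characterization_general
    (ap lp am lm r q : ℝ)
    (hap : 0 < ap) (ham : 0 < am)
    (hrq : q ≤ r)
    (Φ : ℝ → ℝ)
    (hΦ : ∀ θ, Φ θ =
      lm - (((((lp - θ) / (lp - θ - 1)) ^ ap * Real.exp (-(r - q))) ^ (1 / am)) - 1)⁻¹)
    (I : Set ℝ)
    (hI : I = if r = q then Iio (lp - 1)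
              else Ioo (lp - (1 - Real.exp (-(r - q) / ap))⁻¹) (lp - 1))
    (θp θm : ℝ) (hθm : θm < lm) (hθp1 : 1 < lp - θp) :
    ((lp - θp) / (lp - θp - 1)) ^ ap * ((lm - θm) / (lm - θm + 1)) ^ am =
        Real.exp (r - q) ↔
      θp ∈ I ∧ θm = Φ θp := by
  have hbase : 1 < (lp - θp) / (lp - θp - 1) := (one_lt_div (by linarith)).2 (by linarith)
  set B := ((lp - θp) / (lp - θp - 1)) ^ ap
  have hmem : θp ∈ I ↔ exp (r - q) < B := by
    rw [exp_lt_rpow_iff hap (by linarith), hI]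
    split_ifs with hrq'
    · exact iff_of_true (by rw [mem_Iio]; linarith) (by simpa [hrq'] using hbase)
    · have hE : 1 < exp ((r - q) / ap) :=
        one_lt_exp_iff.2 (div_pos (sub_pos.2 (lt_of_le_of_ne hrq (Ne.symm hrq'))) hap)
      rw [mem_Ioo, lt_div_sub_one_iff hθp1 hE, ← exp_neg, ← neg_div]
      constructor
      · rintro ⟨hlow, -⟩
        linarith
      · intro h
        exact ⟨by linarith, by linarith⟩
  calc B * ((lm - θm) / (lm - θm + 1)) ^ am = exp (r - q)
      ↔ ((lm - θm) / (lm - θm + 1)) ^ am = (B * exp (-(r - q)))⁻¹ := by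
        rw [mul_inv, exp_neg, inv_inv, eq_inv_mul_iff_mul_eq₀ (by positivity)]
    _ ↔ 1 < B * exp (-(r - q)) ∧ lm - θm = ((B * exp (-(r - q))) ^ (1 / am) - 1)⁻¹ :=
        rpow_div_add_one_eq_inv_iff (by linarith) ham (by positivity)
    _ ↔ θp ∈ I ∧ θm = Φ θp := by
        rw [hmem, hΦ θp, exp_neg, ← div_eq_mul_inv, one_lt_div (exp_pos _)]
        exact and_congr_right fun _ => by constructor <;> intro h <;> linarith

theorem bilateral_esscher_martingale_characterization
    (ap lp am lm r q : ℝ)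
    (hap : 0 < ap) (hlp : 0 < lp) (ham : 0 < am) (hlm : 0 < lm)
    (hq : 0 ≤ q) (hrq : q ≤ r)
    (Φ : ℝ → ℝ)
    (hΦ : ∀ θ, Φ θ =
      lm - (((((lp - θ) / (lp - θ - 1)) ^ ap * Real.exp (-(r - q))) ^ (1 / am)) - 1)⁻¹)
    (I : Set ℝ)
    (hI : I = if r = q then Iio (lp - 1)
              else Ioo (lp - (1 - Real.exp (-(r - q) / ap))⁻¹) (lp - 1))
    (θp θm : ℝ) (hθp : θp < lp) (hθm : θm < lm) (hθp1 : 1 < lp - θp) :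
    ((lp - θp) / (lp - θp - 1)) ^ ap * ((lm - θm) / (lm - θm + 1)) ^ am =
        Real.exp (r - q) ↔
      θp ∈ I ∧ θm = Φ θp :=
  bilateral_esscher_martingale_characterization_general ap lp am lm r q hap ham hrq Φ hΦ I hI θp θm
    hθm hθp1
end

section
/- Let α⁺, λ⁺, α⁻, λ⁻ > 0, r ≥ q ≥ 0, g(x) = x − 1 − ln x, and let Φ be the bilateral Esscher parametrization on I = (λ⁺ − (1 − e^{−(r−q)/α⁺})^{−1}, λ⁺ − 1). Define f : I → ℝ by f(θ) = α⁺ g(λ⁺/(λ⁺−θ)) + α⁻ g(λ⁻/(λ⁻−Φ(θ))). Then f(θ) → +∞ at both endpoints of I, and consequently f attains a global minimum on I. -/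
/-!
On `I` both ratios `λ⁺/(λ⁺-θ)` and `λ⁻/(λ⁻-Φ(θ))` are positive, so `g ≥ 0` gives
`f ≥ α⁻ g(λ⁻/(λ⁻-Φ(θ)))`. In the variable `s = (λ⁺-θ)/(λ⁺-θ-1)`, which increases from
`e^{(r-q)/α⁺}` at the left end of `I` to `∞` at `λ⁺ - 1`, the second ratio equals
`λ⁻((s^{α⁺} e^{-(r-q)})^{1/α⁻} - 1)`; it tends to `0⁺` at the left end and to `∞` at the right
end, and `g` blows up at both `0⁺` and `∞`. A continuous function on an open interval tending to
`∞` at both ends attains its minimum.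
-/

open Real Set Filter Topology

namespace Real

lemma sub_one_sub_log_nonneg {x : ℝ} (hx : 0 < x) : 0 ≤ x - 1 - log x := by
  linarith [log_le_sub_one_of_pos hx]

lemma continuousOn_sub_one_sub_log : ContinuousOn (fun x : ℝ => x - 1 - log x) (Ioi 0) :=
  (continuousOn_id.sub continuousOn_const).sub
    (continuousOn_log.mono fun _ hx => (mem_Ioi.1 hx).ne')

lemma tendsto_sub_one_sub_log_nhdsGT_zero :
    Tendsto (fun x : ℝ => x - 1 - log x) (𝓝[>] 0) atTop := by
  have h : Tendsto (fun x : ℝ => x - 1) (𝓝[>] 0) (𝓝 (0 - 1)) :=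
    (continuous_id.sub continuous_const).continuousWithinAt
  simpa only [sub_eq_add_neg, Function.comp_def] using
    h.add_atTop (tendsto_neg_atBot_atTop.comp tendsto_log_nhdsGT_zero)

lemma tendsto_sub_one_sub_log_atTop : Tendsto (fun x : ℝ => x - 1 - log x) atTop atTop := by
  refine tendsto_atTop_mono' _ ?_
    (tendsto_atTop_add_const_right _ (-log 2) (tendsto_id.atTop_div_const two_pos))
  filter_upwards [eventually_gt_atTop 0] with x hx
  -- `log x = log (x / 2) + log 2 ≤ x / 2 - 1 + log 2`
  have := log_le_sub_one_of_pos (half_pos hx)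
  rw [log_div hx.ne' two_ne_zero] at this
  simp only [id]
  linarith

end Real

/-- `λ⁻ / (λ⁻ - Φ θ)` as a function of `s = (λ⁺ - θ) / (λ⁺ - θ - 1)`, where `c = r - q`. -/
noncomputable def lowerRatio (ap am lm c s : ℝ) : ℝ := lm * ((s ^ ap * exp (-c)) ^ (1 / am) - 1)

section lowerRatio

variable {ap am lm c : ℝ}

lemma lowerRatio_pos (hap : 0 < ap) (ham : 0 < am) (hlm : 0 < lm) {s : ℝ}
    (hs : exp (c / ap) < s) : 0 < lowerRatio ap am lm c s := by
  have he := exp_pos (c / ap)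
  have hscale : s ^ ap * exp (-c) = (s / exp (c / ap)) ^ ap := by
    rw [div_rpow (he.le.trans hs.le) he.le, ← exp_mul, div_mul_cancel₀ _ hap.ne', exp_neg,
      div_eq_mul_inv]
  have hgt : 1 < (s ^ ap * exp (-c)) ^ (1 / am) := by
    rw [hscale]
    exact one_lt_rpow (one_lt_rpow ((one_lt_div he).2 hs) hap) (one_div_pos.2 ham)
  exact mul_pos hlm (sub_pos.2 hgt)

lemma lowerRatio_exp_div (hap : ap ≠ 0) : lowerRatio ap am lm c (exp (c / ap)) = 0 := by
  rw [lowerRatio, ← exp_mul, div_mul_cancel₀ _ hap, ← exp_add, add_neg_cancel, exp_zero,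
    one_rpow, sub_self, mul_zero]

lemma continuous_lowerRatio (hap : 0 ≤ ap) (ham : 0 ≤ am) : Continuous (lowerRatio ap am lm c) :=
  continuous_const.mul <|
    (((continuous_rpow_const hap).mul continuous_const).rpow_const
      fun _ => Or.inr (one_div_nonneg.2 ham)).sub continuous_const

lemma tendsto_lowerRatio_nhdsGT (hap : 0 < ap) (ham : 0 < am) (hlm : 0 < lm) :
    Tendsto (lowerRatio ap am lm c) (𝓝[>] (exp (c / ap))) (𝓝[>] 0) := by
  refine tendsto_nhdsWithin_of_tendsto_nhds_of_eventually_within _ ?_ ?_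
  · rw [← lowerRatio_exp_div (am := am) (lm := lm) hap.ne']
    exact (continuous_lowerRatio hap.le ham.le).continuousWithinAt
  · filter_upwards [self_mem_nhdsWithin] with s hs using lowerRatio_pos hap ham hlm hs

lemma tendsto_lowerRatio_atTop (hap : 0 < ap) (ham : 0 < am) (hlm : 0 < lm) :
    Tendsto (lowerRatio ap am lm c) atTop atTop := by
  have h := (tendsto_rpow_atTop (one_div_pos.2 ham)).comp
    ((tendsto_rpow_atTop hap).atTop_mul_const (exp_pos (-c)))
  exact ((tendsto_atTop_add_const_right _ (-1) h).const_mul_atTop hlm).congr fun s => by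
    simp only [lowerRatio, Function.comp_apply, sub_eq_add_neg]

end lowerRatio

section ratio

variable (b : ℝ)

lemma div_sub_one_eq_one_add_inv {u : ℝ} (hu : u - 1 ≠ 0) : u / (u - 1) = 1 + (u - 1)⁻¹ := by
  field_simp
  ring

lemma strictMonoOn_div_sub_one : StrictMonoOn (fun θ => (b - θ) / (b - θ - 1)) (Iio (b - 1)) := by
  intro x hx y hy hxy
  have hy' : 0 < b - y - 1 := by linarith [mem_Iio.1 hy]
  simp only
  rw [div_sub_one_eq_one_add_inv (by linarith), div_sub_one_eq_one_add_inv hy'.ne']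
  gcongr

lemma one_lt_div_sub_one {θ : ℝ} (hθ : θ < b - 1) : 1 < (b - θ) / (b - θ - 1) :=
  (one_lt_div (by linarith)).2 (by linarith)

lemma tendsto_div_sub_one_nhdsLT :
    Tendsto (fun θ => (b - θ) / (b - θ - 1)) (𝓝[<] (b - 1)) atTop := by
  have hden : Tendsto (fun θ => b - θ - 1) (𝓝[<] (b - 1)) (𝓝[>] 0) := by
    refine tendsto_nhdsWithin_of_tendsto_nhds_of_eventually_within _ ?_ ?_
    · have : Continuous (fun θ => b - θ - 1) := by fun_prop
      simpa using (this.tendsto (b - 1)).mono_left nhdsWithin_le_nhds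
    · filter_upwards [self_mem_nhdsWithin] with θ (hθ : θ < b - 1)
      exact mem_Ioi.2 (by linarith)
  refine (tendsto_atTop_add_const_left _ 1 (tendsto_inv_nhdsGT_zero.comp hden)).congr' ?_
  filter_upwards [self_mem_nhdsWithin] with θ (hθ : θ < b - 1)
  exact (div_sub_one_eq_one_add_inv (by linarith)).symm

lemma tendsto_div_sub_one_atBot : Tendsto (fun θ => (b - θ) / (b - θ - 1)) atBot (𝓝[>] 1) := by
  refine tendsto_nhdsWithin_of_tendsto_nhds_of_eventually_within _ ?_ ?_
  · have hden : Tendsto (fun θ => b - θ - 1) atBot atTop :=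
      tendsto_atTop_add_const_right _ _ (tendsto_atTop_add_const_left _ _ tendsto_neg_atBot_atTop)
    refine (by simpa using tendsto_const_nhds.add (tendsto_inv_atTop_zero.comp hden) :
      Tendsto (fun θ => 1 + (b - θ - 1)⁻¹) atBot (𝓝 1)).congr' ?_
    filter_upwards [eventually_lt_atBot (b - 1)] with θ hθ
    exact (div_sub_one_eq_one_add_inv (by linarith)).symm
  · filter_upwards [eventually_lt_atBot (b - 1)] with θ hθ using one_lt_div_sub_one b hθ

lemma tendsto_div_sub_one_nhdsGT {θ₀ : ℝ} (hθ₀ : θ₀ < b - 1) :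
    Tendsto (fun θ => (b - θ) / (b - θ - 1)) (𝓝[>] θ₀) (𝓝[>] ((b - θ₀) / (b - θ₀ - 1))) := by
  refine tendsto_nhdsWithin_of_tendsto_nhds_of_eventually_within _ ?_ ?_
  · have : ContinuousAt (fun θ => (b - θ) / (b - θ - 1)) θ₀ :=
      (continuousAt_const.sub continuousAt_id).div
        ((continuousAt_const.sub continuousAt_id).sub continuousAt_const) (by linarith)
    exact this.continuousWithinAt
  · filter_upwards [self_mem_nhdsWithin, nhdsWithin_le_nhds (Iio_mem_nhds hθ₀)] with θ h₀ h₁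
    exact strictMonoOn_div_sub_one b hθ₀ h₁ h₀

lemma sub_inv_one_sub_exp_neg_lt {c ap : ℝ} (hc : 0 < c) (hap : 0 < ap) :
    b - (1 - exp (-c / ap))⁻¹ < b - 1 := by
  have hE : exp (-c / ap) < 1 := exp_lt_one_iff.2 (div_neg_of_neg_of_pos (neg_lt_zero.2 hc) hap)
  have : 1 < (1 - exp (-c / ap))⁻¹ :=
    (one_lt_inv₀ (sub_pos.2 hE)).2 (by linarith [exp_pos (-c / ap)])
  linarith

lemma div_sub_one_at_sub_inv_one_sub_exp_neg {c ap : ℝ} (hc : c ≠ 0) (hap : ap ≠ 0) :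
    (b - (b - (1 - exp (-c / ap))⁻¹)) / (b - (b - (1 - exp (-c / ap))⁻¹) - 1) = exp (c / ap) := by
  have hE : 1 - exp (-c / ap) ≠ 0 := by
    rw [sub_ne_zero, ne_comm, Ne, exp_eq_one_iff]
    exact div_ne_zero (neg_ne_zero.2 hc) hap
  have hden : (1 - exp (-c / ap))⁻¹ - 1 = exp (-c / ap) * (1 - exp (-c / ap))⁻¹ := by
    generalize exp (-c / ap) = E at hE
    field_simp
    ring
  rw [sub_sub_cancel, hden, div_mul_cancel_right₀ (inv_ne_zero hE), neg_div, exp_neg, inv_inv]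

end ratio

/-- The function `f` of the theorem, with `c = r - q`. -/
noncomputable def esscherEntropy (g : ℝ → ℝ) (ap lp am lm c θ : ℝ) : ℝ :=
  ap * g (lp / (lp - θ)) + am * g (lowerRatio ap am lm c ((lp - θ) / (lp - θ - 1)))

section esscherEntropy

variable {g : ℝ → ℝ} {ap lp am lm c : ℝ}

lemma tendsto_esscherEntropy_of_tendsto (hg : ∀ x, 0 < x → 0 ≤ g x) (hap : 0 ≤ ap)
    (ham : 0 < am) (hlp : 0 < lp) {l : Filter ℝ} (hl : ∀ᶠ θ in l, θ < lp)
    (h : Tendsto (fun θ => g (lowerRatio ap am lm c ((lp - θ) / (lp - θ - 1)))) l atTop) :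
    Tendsto (esscherEntropy g ap lp am lm c) l atTop :=
  Tendsto.zero_eventuallyLE_add_atTop
    (hl.mono fun _ hθ => mul_nonneg hap (hg _ (div_pos hlp (sub_pos.2 hθ))))
    (h.const_mul_atTop ham)

lemma tendsto_esscherEntropy_of_tendsto_nhdsGT (hg : ∀ x, 0 < x → 0 ≤ g x)
    (hg_zero : Tendsto g (𝓝[>] 0) atTop) (hap : 0 < ap) (ham : 0 < am) (hlp : 0 < lp) (hlm : 0 < lm)
    {l : Filter ℝ} (hl : ∀ᶠ θ in l, θ < lp)
    (hs : Tendsto (fun θ => (lp - θ) / (lp - θ - 1)) l (𝓝[>] exp (c / ap))) :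
    Tendsto (esscherEntropy g ap lp am lm c) l atTop :=
  tendsto_esscherEntropy_of_tendsto hg hap.le ham hlp hl
    (hg_zero.comp ((tendsto_lowerRatio_nhdsGT hap ham hlm).comp hs))

lemma tendsto_esscherEntropy_nhdsLT (hg : ∀ x, 0 < x → 0 ≤ g x) (hg_top : Tendsto g atTop atTop)
    (hap : 0 < ap) (ham : 0 < am) (hlp : 0 < lp) (hlm : 0 < lm) :
    Tendsto (esscherEntropy g ap lp am lm c) (𝓝[<] (lp - 1)) atTop :=
  tendsto_esscherEntropy_of_tendsto hg hap.le ham hlp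
    (eventually_nhdsWithin_of_forall fun θ (hθ : θ < lp - 1) => by linarith)
    (hg_top.comp ((tendsto_lowerRatio_atTop hap ham hlm).comp (tendsto_div_sub_one_nhdsLT lp)))

lemma continuousOn_esscherEntropy (hg : ContinuousOn g (Ioi 0)) (hap : 0 < ap) (ham : 0 < am)
    (hlp : 0 < lp) (hlm : 0 < lm) :
    ContinuousOn (esscherEntropy g ap lp am lm c)
      {θ | θ < lp - 1 ∧ exp (c / ap) < (lp - θ) / (lp - θ - 1)} := by
  refine (continuousOn_const.mul (hg.comp ?_ ?_)).add (continuousOn_const.mul (hg.comp ?_ ?_))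
  · exact continuousOn_const.div (continuousOn_const.sub continuousOn_id)
      fun θ hθ => by linarith [hθ.1]
  · exact fun θ hθ => div_pos hlp (by linarith [hθ.1])
  · exact (continuous_lowerRatio hap.le ham.le).comp_continuousOn <|
      (continuousOn_const.sub continuousOn_id).div
        ((continuousOn_const.sub continuousOn_id).sub continuousOn_const)
        fun θ hθ => by linarith [hθ.1]
  · exact fun θ hθ => lowerRatio_pos hap ham hlm hθ.2

end esscherEntropy

theorem IsCompact.exists_isMinOn_of_lt_diff {β α : Type*} [TopologicalSpace β] [LinearOrder α]
    [TopologicalSpace α] [ClosedIicTopology α] {f : β → α} {s K : Set β} {x₀ : β}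
    (hK : IsCompact K) (hKs : K ⊆ s) (hf : ContinuousOn f K) (hx₀ : x₀ ∈ K)
    (hlt : ∀ x ∈ s \ K, f x₀ < f x) : ∃ x ∈ s, IsMinOn f s x := by
  obtain ⟨x, hxK, hmin⟩ := hK.exists_isMinOn ⟨x₀, hx₀⟩ hf
  refine ⟨x, hKs hxK, fun y hy => ?_⟩
  by_cases hyK : y ∈ K
  · exact hmin hyK
  · exact (hmin hx₀).trans (hlt y ⟨hy, hyK⟩).le

lemma exists_isMinOn_Ioo_of_tendsto_atTop {f : ℝ → ℝ} {a b : ℝ} (hab : a < b)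
    (hf : ContinuousOn f (Ioo a b)) (ha : Tendsto f (𝓝[>] a) atTop)
    (hb : Tendsto f (𝓝[<] b) atTop) : ∃ x ∈ Ioo a b, IsMinOn f (Ioo a b) x := by
  obtain ⟨x₀, hx₀⟩ := nonempty_Ioo.2 hab
  obtain ⟨u, hu, hau⟩ := mem_nhdsGT_iff_exists_Ioo_subset.1 (ha.eventually_gt_atTop (f x₀))
  obtain ⟨v, hv, hvb⟩ := mem_nhdsLT_iff_exists_Ioo_subset.1 (hb.eventually_gt_atTop (f x₀))
  have hK : Icc (min u x₀) (max v x₀) ⊆ Ioo a b := fun x hx =>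
    ⟨lt_of_lt_of_le (lt_min hu hx₀.1) hx.1, lt_of_le_of_lt hx.2 (max_lt hv hx₀.2)⟩
  refine isCompact_Icc.exists_isMinOn_of_lt_diff hK (hf.mono hK)
    ⟨min_le_right _ _, le_max_right _ _⟩ fun x ⟨hx, hxK⟩ => ?_
  rcases not_and_or.1 hxK with hxu | hxv
  · exact hau ⟨hx.1, lt_of_lt_of_le (not_le.1 hxu) (min_le_left _ _)⟩
  · exact hvb ⟨lt_of_le_of_lt (le_max_left _ _) (not_le.1 hxv), hx.2⟩

lemma exists_isMinOn_Iio_of_tendsto_atTop {f : ℝ → ℝ} {b : ℝ}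
    (hf : ContinuousOn f (Iio b)) (ha : Tendsto f atBot atTop)
    (hb : Tendsto f (𝓝[<] b) atTop) : ∃ x ∈ Iio b, IsMinOn f (Iio b) x := by
  obtain ⟨x₀, hx₀⟩ : (Iio b).Nonempty := nonempty_Iio
  obtain ⟨u, hu⟩ := eventually_atBot.1 (ha.eventually_gt_atTop (f x₀))
  obtain ⟨v, hv, hvb⟩ := mem_nhdsLT_iff_exists_Ioo_subset.1 (hb.eventually_gt_atTop (f x₀))
  have hK : Icc (min u x₀) (max v x₀) ⊆ Iio b := fun x hx =>
    lt_of_le_of_lt hx.2 (max_lt hv hx₀)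
  refine isCompact_Icc.exists_isMinOn_of_lt_diff hK (hf.mono hK)
    ⟨min_le_right _ _, le_max_right _ _⟩ fun x ⟨hx, hxK⟩ => ?_
  rcases not_and_or.1 hxK with hxu | hxv
  · exact hu x ((not_le.1 hxu).le.trans (min_le_left _ _))
  · exact hvb ⟨lt_of_le_of_lt (le_max_left _ _) (not_le.1 hxv), hx⟩

theorem bilateral_esscher_entropy_attains_min_general
    (ap lp am lm r q : ℝ)
    (hap : 0 < ap) (hlp : 0 < lp) (ham : 0 < am) (hlm : 0 < lm)
    (hrq : q ≤ r)
    (g : ℝ → ℝ) (hg : ∀ x, g x = x - 1 - Real.log x)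
    (Φ : ℝ → ℝ)
    (hΦ : ∀ θ, Φ θ =
      lm - (((((lp - θ) / (lp - θ - 1)) ^ ap * Real.exp (-(r - q))) ^ (1 / am)) - 1)⁻¹)
    (I : Set ℝ)
    (hI : I = if r = q then Iio (lp - 1)
              else Ioo (lp - (1 - Real.exp (-(r - q) / ap))⁻¹) (lp - 1))
    (f : ℝ → ℝ)
    (hf : ∀ θ, f θ = ap * g (lp / (lp - θ)) + am * g (lm / (lm - Φ θ))) :
    (if r = q then Tendsto f atBot atTop
     else Tendsto f
       (nhdsWithin (lp - (1 - Real.exp (-(r - q) / ap))⁻¹)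
         (Ioi (lp - (1 - Real.exp (-(r - q) / ap))⁻¹))) atTop) ∧
    Tendsto f (nhdsWithin (lp - 1) (Iio (lp - 1))) atTop ∧
    ∃ θ ∈ I, ∀ θ' ∈ I, f θ ≤ f θ' := by
  obtain rfl : g = fun x => x - 1 - log x := funext hg
  obtain rfl : f = esscherEntropy (fun x => x - 1 - log x) ap lp am lm (r - q) :=
    funext fun θ => by rw [hf, hΦ, sub_sub_cancel, div_inv_eq_mul]; rfl
  have hg_nonneg : ∀ x : ℝ, 0 < x → 0 ≤ x - 1 - log x := fun _ => sub_one_sub_log_nonneg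
  have hcont := continuousOn_esscherEntropy (c := r - q) continuousOn_sub_one_sub_log
    hap ham hlp hlm
  have hleft := fun l => tendsto_esscherEntropy_of_tendsto_nhdsGT (c := r - q) (l := l) hg_nonneg
    tendsto_sub_one_sub_log_nhdsGT_zero hap ham hlp hlm
  have hR := tendsto_esscherEntropy_nhdsLT (c := r - q) hg_nonneg tendsto_sub_one_sub_log_atTop
    hap ham hlp hlm
  by_cases hqr : r = q
  · have h1 : exp ((r - q) / ap) = 1 := by simp [hqr]
    have hL := hleft atBot (eventually_lt_atBot lp) (h1 ▸ tendsto_div_sub_one_atBot lp)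
    rw [if_pos hqr] at hI ⊢
    subst hI
    refine ⟨hL, hR, exists_isMinOn_Iio_of_tendsto_atTop (hcont.mono fun θ hθ => ⟨hθ, ?_⟩) hL hR⟩
    exact h1 ▸ one_lt_div_sub_one lp hθ
  · have hc : 0 < r - q := sub_pos.2 (hrq.lt_of_ne' hqr)
    have hθ₀ := sub_inv_one_sub_exp_neg_lt lp hc hap
    have hsθ₀ := div_sub_one_at_sub_inv_one_sub_exp_neg lp hc.ne' hap.ne'
    have hL := hleft _ (nhdsWithin_le_nhds (eventually_lt_nhds (by linarith)))
      (hsθ₀ ▸ tendsto_div_sub_one_nhdsGT lp hθ₀)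
    rw [if_neg hqr] at hI ⊢
    subst hI
    refine ⟨hL, hR,
      exists_isMinOn_Ioo_of_tendsto_atTop hθ₀ (hcont.mono fun θ hθ => ⟨hθ.2, ?_⟩) hL hR⟩
    exact hsθ₀ ▸ strictMonoOn_div_sub_one lp hθ₀ hθ.2 hθ.1

theorem bilateral_esscher_entropy_attains_min
    (ap lp am lm r q : ℝ)
    (hap : 0 < ap) (hlp : 0 < lp) (ham : 0 < am) (hlm : 0 < lm)
    (hq : 0 ≤ q) (hrq : q ≤ r)
    (g : ℝ → ℝ) (hg : ∀ x, g x = x - 1 - Real.log x)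
    (Φ : ℝ → ℝ)
    (hΦ : ∀ θ, Φ θ =
      lm - (((((lp - θ) / (lp - θ - 1)) ^ ap * Real.exp (-(r - q))) ^ (1 / am)) - 1)⁻¹)
    (I : Set ℝ)
    (hI : I = if r = q then Iio (lp - 1)
              else Ioo (lp - (1 - Real.exp (-(r - q) / ap))⁻¹) (lp - 1))
    (f : ℝ → ℝ)
    (hf : ∀ θ, f θ = ap * g (lp / (lp - θ)) + am * g (lm / (lm - Φ θ))) :
    (if r = q then Tendsto f atBot atTop
     else Tendsto f
       (nhdsWithin (lp - (1 - Real.exp (-(r - q) / ap))⁻¹)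
         (Ioi (lp - (1 - Real.exp (-(r - q) / ap))⁻¹))) atTop) ∧
    Tendsto f (nhdsWithin (lp - 1) (Iio (lp - 1))) atTop ∧
    ∃ θ ∈ I, ∀ θ' ∈ I, f θ ≤ f θ' :=
  bilateral_esscher_entropy_attains_min_general ap lp am lm r q hap hlp ham hlm hrq g hg Φ hΦ I hI f
    hf
end

section
/- For θ < 0, the function x ↦ α⁺ (1/x) e^{−λ⁺x}(e^x − 1)e^{θ(e^x−1)} is integrable on (0, ∞) for all λ⁺ > 0, α⁺ > 0, and the map G(θ) = ∫₀^∞ (1/x)e^{−λ⁺x}(e^x−1)e^{θ(e^x−1)} dx is continuous and strictly increasing on (−∞, 0) with G(θ) → 0 as θ → −∞; if λ⁺ ≤ 1 then G(θ) → +∞ as θ ↑ 0. -/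
/-!
For `x > 0` the integrand is positive and strictly increasing in `θ`. For `θ < 0` it is bounded
by `exp ((1 - lp) * x)` on `(0, 1]` and, since `t * exp (θ * t) ≤ (-θ)⁻¹`, by
`(-θ)⁻¹ * exp (-lp * x)` on `(1, ∞)`; dominated convergence then gives continuity of `G` and
`G θ → 0` as `θ → -∞`. If `lp ≤ 1`, the integrand at `θ = 0` is at least `(2 * x)⁻¹` for
`x ≥ 1`, so truncating to `(1, R]` bounds `G θ` below by a multiple of `log R` for `θ` close
enough to `0`.
-/

open Real Set Filter MeasureTheory Topology

lemma setIntegral_lt_setIntegral_of_forall_lt {α : Type*} [MeasurableSpace α] {μ : Measure α}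
    {s : Set α} {f g : α → ℝ} (hs : MeasurableSet s) (hμs : μ s ≠ 0)
    (hf : IntegrableOn f s μ) (hg : IntegrableOn g s μ) (hlt : ∀ x ∈ s, f x < g x) :
    ∫ x in s, f x ∂μ < ∫ x in s, g x ∂μ := by
  rw [← sub_pos, ← integral_sub hg hf]
  have hnonneg : 0 ≤ᵐ[μ.restrict s] fun x => g x - f x := by
    filter_upwards [ae_restrict_mem hs] with x hx using (sub_pos.2 (hlt x hx)).le
  rw [setIntegral_pos_iff_support_of_nonneg_ae hnonneg (hg.sub hf)]
  exact (pos_iff_ne_zero.2 hμs).trans_le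
    (measure_mono fun x hx => ⟨(sub_pos.2 (hlt x hx)).ne', hx⟩)

lemma tendsto_atTop_nhdsLT_of_monotoneOn {α β : Type*} [LinearOrder α] [TopologicalSpace α]
    [OrderTopology α] [Preorder β] {f : α → β} {a : α} (hf : MonotoneOn f (Iio a))
    (hunbdd : ∀ M, ∃ x < a, M ≤ f x) : Tendsto f (𝓝[<] a) atTop := by
  refine tendsto_atTop.2 fun M => ?_
  obtain ⟨x, hxa, hMx⟩ := hunbdd M
  filter_upwards [Ioo_mem_nhdsLT hxa] with y hy
  exact hMx.trans (hf hxa hy.2 hy.1.le)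

lemma mul_exp_neg_mul_le_inv {c : ℝ} (hc : 0 < c) (t : ℝ) : t * exp (-(c * t)) ≤ c⁻¹ := by
  rw [← one_div, le_div_iff₀ hc]
  calc t * exp (-(c * t)) * c = c * t * exp (-(c * t)) := by ring
    _ ≤ exp (-1) := mul_exp_neg_le_exp_neg_one _
    _ ≤ 1 := exp_le_one_iff.2 (by norm_num)

lemma exp_sub_one_pos {x : ℝ} (hx : 0 < x) : 0 < exp x - 1 :=
  sub_pos.2 (one_lt_exp_iff.2 hx)

lemma exp_sub_one_le_mul_exp (x : ℝ) : exp x - 1 ≤ x * exp x := by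
  have h := mul_le_mul_of_nonneg_right (one_sub_le_exp_neg x) (exp_pos x).le
  rw [← exp_add, neg_add_cancel, exp_zero] at h
  linarith

noncomputable def jumpIntegrand (lp θ x : ℝ) : ℝ :=
  (1 / x) * exp (-lp * x) * (exp x - 1) * exp (θ * (exp x - 1))

section Pointwise

variable {lp θ x : ℝ}

lemma jumpIntegrand_eq_mul (lp θ x : ℝ) :
    jumpIntegrand lp θ x = jumpIntegrand lp 0 x * exp (θ * (exp x - 1)) := by
  simp [jumpIntegrand]

lemma jumpIntegrand_zero_pos (hx : 0 < x) : 0 < jumpIntegrand lp 0 x := by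
  have := exp_sub_one_pos hx
  unfold jumpIntegrand
  positivity

lemma jumpIntegrand_pos (hx : 0 < x) : 0 < jumpIntegrand lp θ x := by
  rw [jumpIntegrand_eq_mul]
  exact mul_pos (jumpIntegrand_zero_pos hx) (exp_pos _)

lemma strictMono_jumpIntegrand (hx : 0 < x) : StrictMono (jumpIntegrand lp · x) := by
  intro a b hab
  dsimp only
  rw [jumpIntegrand_eq_mul lp a, jumpIntegrand_eq_mul lp b]
  exact mul_lt_mul_of_pos_left
    (exp_lt_exp.2 (mul_lt_mul_of_pos_right hab (exp_sub_one_pos hx)))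
    (jumpIntegrand_zero_pos hx)

lemma continuous_jumpIntegrand_param (lp x : ℝ) : Continuous (jumpIntegrand lp · x) := by
  unfold jumpIntegrand
  fun_prop

lemma continuousOn_jumpIntegrand (lp θ : ℝ) : ContinuousOn (jumpIntegrand lp θ) (Ioi 0) := by
  unfold jumpIntegrand
  fun_prop (disch := exact fun x hx => ne_of_gt hx)

lemma jumpIntegrand_le_exp (hθ : θ ≤ 0) (hx : 0 < x) :
    jumpIntegrand lp θ x ≤ exp ((1 - lp) * x) := by
  have hquot : (exp x - 1) / x ≤ exp x := (div_le_iff₀' hx).2 (exp_sub_one_le_mul_exp x)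
  have hquot_nonneg : 0 ≤ (exp x - 1) / x := div_nonneg (exp_sub_one_pos hx).le hx.le
  have hdamp : exp (θ * (exp x - 1)) ≤ 1 :=
    exp_le_one_iff.2 (mul_nonpos_of_nonpos_of_nonneg hθ (exp_sub_one_pos hx).le)
  calc jumpIntegrand lp θ x = (exp x - 1) / x * exp (-lp * x) * exp (θ * (exp x - 1)) := by
        unfold jumpIntegrand; ring
    _ ≤ exp x * exp (-lp * x) * 1 := by gcongr
    _ = exp ((1 - lp) * x) := by rw [mul_one, ← exp_add]; ring_nf

lemma jumpIntegrand_le_inv_mul_exp (hθ : θ < 0) (hx : 1 ≤ x) :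
    jumpIntegrand lp θ x ≤ (-θ)⁻¹ * exp (-lp * x) := by
  have hdamp : (exp x - 1) * exp (θ * (exp x - 1)) ≤ (-θ)⁻¹ := by
    simpa using mul_exp_neg_mul_le_inv (neg_pos.2 hθ) (exp x - 1)
  have hnonneg : 0 ≤ (exp x - 1) * exp (θ * (exp x - 1)) :=
    mul_nonneg (exp_sub_one_pos (by linarith)).le (exp_pos _).le
  calc jumpIntegrand lp θ x = x⁻¹ * exp (-lp * x) * ((exp x - 1) * exp (θ * (exp x - 1))) := by
        unfold jumpIntegrand; ring
    _ ≤ 1 * exp (-lp * x) * (-θ)⁻¹ := by gcongr; exact inv_le_one_of_one_le₀ hx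
    _ = (-θ)⁻¹ * exp (-lp * x) := by ring

lemma inv_two_mul_le_jumpIntegrand_zero (hlp : lp ≤ 1) (hx : 1 ≤ x) :
    (2 * x)⁻¹ ≤ jumpIntegrand lp 0 x := by
  have hexp : 2⁻¹ ≤ 1 - exp (-x) := by
    have : (exp x)⁻¹ ≤ 2⁻¹ := inv_anti₀ two_pos (by linarith [add_one_le_exp x])
    rw [exp_neg]
    linarith
  have hmass : 1 - exp (-x) ≤ exp (-lp * x) * (exp x - 1) := by
    have hmono : exp (-x) ≤ exp (-lp * x) := exp_le_exp.2 (by nlinarith)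
    have hcancel : exp (-x) * (exp x - 1) = 1 - exp (-x) := by
      rw [mul_sub, ← exp_add, neg_add_cancel, exp_zero, mul_one]
    rw [← hcancel]
    exact mul_le_mul_of_nonneg_right hmono (exp_sub_one_pos (by linarith)).le
  calc (2 * x)⁻¹ = x⁻¹ * 2⁻¹ := by rw [mul_inv, mul_comm]
    _ ≤ x⁻¹ * (exp (-lp * x) * (exp x - 1)) := by gcongr; linarith
    _ = jumpIntegrand lp 0 x := by simp [jumpIntegrand]; ring

end Pointwise

section Integral

variable {lp θ : ℝ}

lemma aestronglyMeasurable_jumpIntegrand (lp θ : ℝ) {s : Set ℝ} (hs : MeasurableSet s)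
    (hsub : s ⊆ Ioi 0) : AEStronglyMeasurable (jumpIntegrand lp θ) (volume.restrict s) :=
  ((continuousOn_jumpIntegrand lp θ).mono hsub).aestronglyMeasurable hs

lemma ae_norm_jumpIntegrand_le {θ' : ℝ} (h : θ ≤ θ') :
    ∀ᵐ x ∂volume.restrict (Ioi 0),
      ‖jumpIntegrand lp θ x‖ ≤ jumpIntegrand lp θ' x := by
  filter_upwards [ae_restrict_mem measurableSet_Ioi] with x hx
  rw [norm_of_nonneg (jumpIntegrand_pos hx).le]
  exact (strictMono_jumpIntegrand hx).monotone h

lemma integrableOn_jumpIntegrand (hlp : 0 < lp) (hθ : θ < 0) :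
    IntegrableOn (jumpIntegrand lp θ) (Ioi 0) := by
  rw [← Ioc_union_Ioi_eq_Ioi zero_le_one]
  refine IntegrableOn.union ?_ ?_
  · refine (integrableOn_const (C := exp 1) measure_Ioc_lt_top.ne).mono'
      (aestronglyMeasurable_jumpIntegrand lp θ measurableSet_Ioc Ioc_subset_Ioi_self) ?_
    filter_upwards [ae_restrict_mem measurableSet_Ioc] with x hx
    rw [norm_of_nonneg (jumpIntegrand_pos hx.1).le]
    exact (jumpIntegrand_le_exp hθ.le hx.1).trans (exp_le_exp.2 (by nlinarith [hx.1, hx.2]))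
  · refine ((exp_neg_integrableOn_Ioi 1 hlp).const_mul (-θ)⁻¹).mono'
      (aestronglyMeasurable_jumpIntegrand lp θ measurableSet_Ioi
        (Ioi_subset_Ioi zero_le_one)) ?_
    filter_upwards [ae_restrict_mem measurableSet_Ioi] with x hx
    rw [norm_of_nonneg (jumpIntegrand_pos (zero_lt_one.trans hx)).le]
    exact jumpIntegrand_le_inv_mul_exp hθ (le_of_lt hx)

lemma continuousOn_integral_jumpIntegrand (hlp : 0 < lp) :
    ContinuousOn (fun θ => ∫ x in Ioi 0, jumpIntegrand lp θ x) (Iio 0) := by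
  intro θ₀ hθ₀
  have hθ₀ : θ₀ < 0 := hθ₀
  refine (continuousAt_of_dominated (bound := jumpIntegrand lp (θ₀ / 2))
    (Eventually.of_forall fun θ => aestronglyMeasurable_jumpIntegrand lp θ measurableSet_Ioi
      subset_rfl) ?_ (integrableOn_jumpIntegrand hlp (by linarith))
    (ae_of_all _ fun x => (continuous_jumpIntegrand_param lp x).continuousAt)).continuousWithinAt
  filter_upwards [Iio_mem_nhds (by linarith : θ₀ < θ₀ / 2)] with θ hθ
  exact ae_norm_jumpIntegrand_le (le_of_lt hθ)

lemma strictMonoOn_integral_jumpIntegrand (hlp : 0 < lp) :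
    StrictMonoOn (fun θ => ∫ x in Ioi 0, jumpIntegrand lp θ x) (Iio 0) :=
  fun _ ha _ hb hab => setIntegral_lt_setIntegral_of_forall_lt measurableSet_Ioi (by simp)
    (integrableOn_jumpIntegrand hlp ha) (integrableOn_jumpIntegrand hlp hb)
    fun _ hx => strictMono_jumpIntegrand hx hab

lemma tendsto_integral_jumpIntegrand_atBot (hlp : 0 < lp) :
    Tendsto (fun θ => ∫ x in Ioi 0, jumpIntegrand lp θ x) atBot (𝓝 0) := by
  have hlim : ∀ᵐ x ∂volume.restrict (Ioi 0),
      Tendsto (jumpIntegrand lp · x) atBot (𝓝 0) := by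
    filter_upwards [ae_restrict_mem measurableSet_Ioi] with x hx
    have h := (tendsto_exp_atBot.comp (tendsto_id.atBot_mul_const (exp_sub_one_pos hx))).const_mul
      (jumpIntegrand lp 0 x)
    rw [mul_zero] at h
    exact h.congr fun θ => (jumpIntegrand_eq_mul lp θ x).symm
  simpa using tendsto_integral_filter_of_dominated_convergence (jumpIntegrand lp (-1))
    (Eventually.of_forall fun θ => aestronglyMeasurable_jumpIntegrand lp θ measurableSet_Ioi
      subset_rfl)
    ((eventually_le_atBot (-1)).mono fun _ hθ => ae_norm_jumpIntegrand_le hθ)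
    (integrableOn_jumpIntegrand hlp (by norm_num)) hlim

lemma mul_log_le_integral_jumpIntegrand (hlp : 0 < lp) (hlp1 : lp ≤ 1) (hθ : θ < 0) {R : ℝ}
    (hR : 1 ≤ R) :
    exp (θ * (exp R - 1)) / 2 * log R ≤ ∫ x in Ioi 0, jumpIntegrand lp θ x := by
  set c := exp (θ * (exp R - 1)) / 2
  have hsub : Ioc 1 R ⊆ Ioi (0 : ℝ) := fun x hx => zero_lt_one.trans hx.1
  have hlower : ∀ x ∈ Ioc 1 R, c * x⁻¹ ≤ jumpIntegrand lp θ x := by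
    intro x hx
    have hx1 : 1 ≤ x := hx.1.le
    have hdamp : exp (θ * (exp R - 1)) ≤ exp (θ * (exp x - 1)) :=
      exp_le_exp.2 (mul_le_mul_of_nonpos_left (by gcongr; exact hx.2) hθ.le)
    rw [jumpIntegrand_eq_mul]
    calc c * x⁻¹ = exp (θ * (exp R - 1)) * (2 * x)⁻¹ := by rw [mul_inv]; ring
      _ ≤ exp (θ * (exp x - 1)) * jumpIntegrand lp 0 x := by
        gcongr
        exact inv_two_mul_le_jumpIntegrand_zero hlp1 hx1
      _ = _ := mul_comm _ _
  have hinv : IntegrableOn (fun x : ℝ => c * x⁻¹) (Ioc 1 R) :=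
    (ContinuousOn.integrableOn_Icc (continuousOn_const.mul (continuousOn_inv₀.mono
      fun x hx => (zero_lt_one.trans_le hx.1).ne'))).mono_set Ioc_subset_Icc_self
  have hint := integrableOn_jumpIntegrand hlp hθ
  calc c * log R = ∫ x in Ioc 1 R, c * x⁻¹ := by
        rw [← intervalIntegral.integral_of_le hR, intervalIntegral.integral_const_mul,
          integral_inv_of_pos one_pos (by linarith), div_one]
    _ ≤ ∫ x in Ioc 1 R, jumpIntegrand lp θ x :=
        setIntegral_mono_on hinv (hint.mono_set hsub) measurableSet_Ioc hlower
    _ ≤ ∫ x in Ioi 0, jumpIntegrand lp θ x :=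
        setIntegral_mono_set hint ((ae_restrict_mem measurableSet_Ioi).mono
          fun x hx => (jumpIntegrand_pos hx).le) hsub.eventuallyLE

lemma tendsto_integral_jumpIntegrand_nhdsLT (hlp : 0 < lp) (hlp1 : lp ≤ 1) :
    Tendsto (fun θ => ∫ x in Ioi 0, jumpIntegrand lp θ x) (𝓝[<] 0) atTop := by
  refine tendsto_atTop_nhdsLT_of_monotoneOn (strictMonoOn_integral_jumpIntegrand hlp).monotoneOn
    fun M => ?_
  -- at `θ = -log 2 / (exp R - 1)` the damping factor in the lower bound is exactly `1 / 2`
  set R := exp (4 * |M|)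
  have hR : 1 ≤ R := one_le_exp (by positivity)
  have hER : 0 < exp R - 1 := exp_sub_one_pos (by linarith)
  have hθ : -log 2 / (exp R - 1) < 0 :=
    div_neg_of_neg_of_pos (neg_neg_of_pos (log_pos one_lt_two)) hER
  refine ⟨_, hθ, le_trans ?_ (mul_log_le_integral_jumpIntegrand hlp hlp1 hθ hR)⟩
  rw [div_mul_cancel₀ _ hER.ne', exp_neg, exp_log two_pos, log_exp]
  linarith [le_abs_self M]

end Integral

theorem memm_positive_jump_integral_properties_general
    (ap lp : ℝ) (hlp : 0 < lp)
    (G : ℝ → ℝ)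
    (hG : ∀ θ, G θ = ∫ x in Ioi (0 : ℝ),
      (1 / x) * Real.exp (-lp * x) * (Real.exp x - 1) * Real.exp (θ * (Real.exp x - 1))) :
    (∀ θ < (0 : ℝ), IntegrableOn
        (fun x => ap * ((1 / x) * Real.exp (-lp * x) * (Real.exp x - 1) *
          Real.exp (θ * (Real.exp x - 1)))) (Ioi (0 : ℝ))) ∧
    ContinuousOn G (Iio (0 : ℝ)) ∧
    StrictMonoOn G (Iio (0 : ℝ)) ∧
    Tendsto G atBot (nhds 0) ∧
    (lp ≤ 1 → Tendsto G (nhdsWithin 0 (Iio (0 : ℝ))) atTop) := by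
  obtain rfl : G = fun θ => ∫ x in Ioi 0, jumpIntegrand lp θ x := funext hG
  exact ⟨fun θ hθ => (integrableOn_jumpIntegrand hlp hθ).const_mul ap,
    continuousOn_integral_jumpIntegrand hlp, strictMonoOn_integral_jumpIntegrand hlp,
    tendsto_integral_jumpIntegrand_atBot hlp, tendsto_integral_jumpIntegrand_nhdsLT hlp⟩

theorem memm_positive_jump_integral_properties
    (ap lp : ℝ) (hap : 0 < ap) (hlp : 0 < lp)
    (G : ℝ → ℝ)
    (hG : ∀ θ, G θ = ∫ x in Ioi (0 : ℝ),
      (1 / x) * Real.exp (-lp * x) * (Real.exp x - 1) * Real.exp (θ * (Real.exp x - 1))) :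
    (∀ θ < (0 : ℝ), IntegrableOn
        (fun x => ap * ((1 / x) * Real.exp (-lp * x) * (Real.exp x - 1) *
          Real.exp (θ * (Real.exp x - 1)))) (Ioi (0 : ℝ))) ∧
    ContinuousOn G (Iio (0 : ℝ)) ∧
    StrictMonoOn G (Iio (0 : ℝ)) ∧
    Tendsto G atBot (nhds 0) ∧
    (lp ≤ 1 → Tendsto G (nhdsWithin 0 (Iio (0 : ℝ))) atTop) :=
  memm_positive_jump_integral_properties_general ap lp hlp G hG
end
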